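/- The quotient space 𝓜₁(A) is a T0 topological space if and only if the ideal class group Cl(A) of A is a torsion group. -/

import Mathlib

open Ideal

/-- A totally multiplicative arithmetic function on the monoid `I_A` of nonzero
ideals of `A`, with values in `K`.  It is encoded as a function on all ideals,
with `f(A) = 1`, `f(𝔞𝔟) = f(𝔞) f(𝔟)` for nonzero ideals `𝔞, 𝔟`, and the
convention `f((0)) = 0`. -/
structure TotMult (A K : Type*) [CommRing A] [Field K] where
  toFun : Ideal A → K
  map_top : toFun ⊤ = 1
  map_mul : ∀ I J : Ideal A, I ≠ ⊥ → J ≠ ⊥ → toFun (I * J) = toFun I * toFun J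
  map_bot : toFun ⊥ = 0

/-- The basic open set 𝒟(a) = {f ∈ 𝓜(A) : f(aA) ≠ 0}. -/
def Dset (A K : Type*) [CommRing A] [Field K] (a : A) : Set (TotMult A K) :=
  {f | f.toFun (Ideal.span {a}) ≠ 0}

/-- The topology on 𝓜(A) whose closed sets are the sets
𝒱(S) = {f : f(aA) = 0 for all a ∈ S}, S ⊆ A∖{0}; equivalently, the topology with
basis of open sets the sets 𝒟(a) for a ∈ A∖{0} (the family of such 𝒟(a) is closed
under finite intersections, since 𝒟(a) ∩ 𝒟(b) = 𝒟(ab) and 𝒟(1) is the whole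
space, so the topology it generates has exactly the arbitrary unions
∪_{a ∈ S} 𝒟(a) = complement of 𝒱(S) as its open sets). -/
instance totMultTopology (A K : Type*) [CommRing A] [Field K] :
    TopologicalSpace (TotMult A K) :=
  TopologicalSpace.generateFrom {U | ∃ a : A, a ≠ 0 ∧ U = Dset A K a}

/-- 𝒵(f), the set of prime ideal zeros of `f`: maximal ideals `𝔭` with `f(𝔭) = 0`. -/
def Zset (A K : Type*) [CommRing A] [Field K] (f : TotMult A K) : Set (Ideal A) :=
  {p | p.IsMaximal ∧ f.toFun p = 0}

/-- The equivalence relation on 𝓜(A): f ∼ g iff 𝒵(f) = 𝒵(g). -/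
def msetoid (A K : Type*) [CommRing A] [Field K] : Setoid (TotMult A K) where
  r f g := Zset A K f = Zset A K g
  iseqv := ⟨fun _ => rfl, Eq.symm, Eq.trans⟩

/-- 𝓜₁(A) = 𝓜(A)/∼, with the quotient topology. -/
def M1 (A K : Type*) [CommRing A] [Field K] : Type _ := Quotient (msetoid A K)

instance (A K : Type*) [CommRing A] [Field K] : TopologicalSpace (M1 A K) :=
  inferInstanceAs (TopologicalSpace (Quotient (msetoid A K)))

/-!
For `a ≠ 0`, factoring `aA` into primes shows that `f(aA) = 0` iff `a` lies in some `𝔭 ∈ 𝒵(f)`.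
Hence the basic open sets `𝒟(a)` only see `𝒵(f)`, every open set of `𝓜(A)` is `∼`-saturated, and
`𝓜₁(A)` is T0 iff inseparable points of `𝓜(A)` have the same zeros.

If `𝔭ⁿ = aA` with `n > 0`, then `𝒟(a)` separates `f` from `g` whenever `𝔭 ∈ 𝒵(f) \ 𝒵(g)`.
Conversely, the indicator of the powers of `𝔭` and the indicator of `{A}` differ in their zeros
exactly at `𝔭`, and a `𝒟(a)` separating them forces `aA` to be a positive power of `𝔭`.
-/

section Topology

variable {X : Type*}

theorem inseparable_generateFrom_iff {g : Set (Set X)} {x y : X} :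
    @Inseparable X (TopologicalSpace.generateFrom g) x y ↔ ∀ s ∈ g, (x ∈ s ↔ y ∈ s) := by
  let := TopologicalSpace.generateFrom g
  refine ⟨fun h s hs => h.mem_open_iff (TopologicalSpace.isOpen_generateFrom_of_mem hs),
    fun h => ?_⟩
  have hxy : {s | x ∈ s ∧ s ∈ g} = {s | y ∈ s ∧ s ∈ g} :=
    Set.ext fun s => ⟨fun ⟨hx, hs⟩ => ⟨(h s hs).mp hx, hs⟩, fun ⟨hy, hs⟩ => ⟨(h s hs).mpr hy, hs⟩⟩
  change nhds x = nhds y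
  rw [TopologicalSpace.nhds_generateFrom, TopologicalSpace.nhds_generateFrom, hxy]

theorem inseparable_quotient_mk_iff [TopologicalSpace X] {s : Setoid X}
    (hs : ∀ x y, s x y → Inseparable x y) {x y : X} :
    Inseparable (Quotient.mk s x) (Quotient.mk s y) ↔ Inseparable x y := by
  refine ⟨fun h => inseparable_iff_forall_isOpen.mpr fun U hU => ?_,
    fun h => h.map continuous_quotient_mk'⟩
  have hsat : Quotient.mk s ⁻¹' (Quotient.mk s '' U) = U := by
    refine (Set.subset_preimage_image _ _).antisymm' ?_
    rintro z ⟨w, hw, hwz⟩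
    exact ((hs w z (Quotient.exact hwz)).mem_open_iff hU).mp hw
  have hV : IsOpen (Quotient.mk s '' U) :=
    isQuotientMap_quotient_mk'.isOpen_preimage.mp (hsat.symm ▸ hU)
  rw [← hsat]
  exact h.mem_open_iff hV

end Topology

theorem Prime.mem_powers_of_mul_mem_powers {M : Type*} [CommMonoidWithZero M]
    [IsCancelMulZero M] [Unique Mˣ] {p a b : M} (hp : Prime p) (h : a * b ∈ Submonoid.powers p) :
    a ∈ Submonoid.powers p := by
  obtain ⟨n, hn⟩ := h
  obtain ⟨i, -, hi⟩ := (dvd_prime_pow hp n).mp ⟨b, hn⟩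
  exact ⟨i, (associated_iff_eq.mp hi).symm⟩

section ClassGroup

open scoped nonZeroDivisors

variable {A : Type*} [CommRing A] [IsDedekindDomain A]

theorem ClassGroup.isOfFinOrder_mk0_iff (I : (Ideal A)⁰) :
    IsOfFinOrder (ClassGroup.mk0 I) ↔ ∃ n, 0 < n ∧ ((I : Ideal A) ^ n).IsPrincipal := by
  simp only [isOfFinOrder_iff_pow_eq_one, ← map_pow]
  exact exists_congr fun n => and_congr_right fun _ => ClassGroup.mk0_eq_one_iff (I ^ n).2

theorem ClassGroup.isMulTorsion_iff :
    IsMulTorsion (ClassGroup A) ↔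
      ∀ p : Ideal A, Prime p → ∃ n, 0 < n ∧ (p ^ n).IsPrincipal := by
  refine ⟨fun h p hp => (isOfFinOrder_mk0_iff ⟨p, mem_nonZeroDivisors_of_ne_zero hp.ne_zero⟩).mp
    (h _), fun h c => ?_⟩
  obtain ⟨⟨I, hI⟩, rfl⟩ := ClassGroup.mk0_surjective c
  induction I using UniqueFactorizationMonoid.induction_on_prime with
  | h₁ => exact absurd hI zero_notMem_nonZeroDivisors
  | h₂ I hunit =>
    obtain rfl : I = 1 := isUnit_iff_eq_one.mp hunit
    convert IsOfFinOrder.one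
    exact map_one ClassGroup.mk0
  | h₃ J p hJ hp ih =>
    have hp' := mem_nonZeroDivisors_of_ne_zero hp.ne_zero
    have hJ' := mem_nonZeroDivisors_of_ne_zero hJ
    have hsplit : (⟨p * J, hI⟩ : (Ideal A)⁰) = ⟨p, hp'⟩ * ⟨J, hJ'⟩ := rfl
    rw [hsplit, map_mul]
    exact ((isOfFinOrder_mk0_iff _).mpr (h p hp)).mul (ih hJ')

end ClassGroup

namespace TotMult

variable {A K : Type*} [CommRing A] [Field K]

open Classical in
noncomputable def indicator (M : Submonoid (Ideal A)) (hM : ∀ I J, I * J ∈ M → I ∈ M)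
    (hbot : ⊥ ∉ M) : TotMult A K where
  toFun I := if I ∈ M then 1 else 0
  map_top := if_pos (one_eq_top (R := A) ▸ M.one_mem)
  map_mul I J _ _ := by
    by_cases hIJ : I * J ∈ M
    · simp [hIJ, hM I J hIJ, hM J I (mul_comm I J ▸ hIJ)]
    · have : I ∉ M ∨ J ∉ M := by
        by_contra! h
        exact hIJ (mul_mem h.1 h.2)
      rcases this with h | h <;> simp [hIJ, h]
  map_bot := if_neg hbot

theorem indicator_eq_zero_iff {M : Submonoid (Ideal A)} {hM hbot} {I : Ideal A} :
    (indicator (K := K) M hM hbot).toFun I = 0 ↔ I ∉ M := by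
  simp [indicator]

theorem inseparable_iff {f g : TotMult A K} :
    Inseparable f g ↔ ∀ a ≠ 0, (f ∈ Dset A K a ↔ g ∈ Dset A K a) := by
  refine inseparable_generateFrom_iff.trans ⟨fun h a ha => h _ ⟨a, ha, rfl⟩, ?_⟩
  rintro h _ ⟨a, ha, rfl⟩
  exact h a ha

variable [IsDedekindDomain A]

theorem apply_eq_zero_iff (f : TotMult A K) {I : Ideal A} (hI : I ≠ ⊥) :
    f.toFun I = 0 ↔ ∃ p ∈ Zset A K f, I ≤ p := by
  refine ⟨fun hfI => ?_, fun ⟨p, ⟨_, hfp⟩, hle⟩ => ?_⟩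
  · induction I using UniqueFactorizationMonoid.induction_on_prime with
    | h₁ => exact absurd rfl hI
    | h₂ I hunit =>
      rw [isUnit_iff.mp hunit, f.map_top] at hfI
      exact absurd hfI one_ne_zero
    | h₃ J p hJ hp ih =>
      have hp0 : p ≠ ⊥ := hp.ne_zero
      rw [f.map_mul p J hp0 hJ, mul_eq_zero] at hfI
      rcases hfI with hfp | hfJ
      · exact ⟨p, ⟨(isPrime_of_prime hp).isMaximal hp0, hfp⟩, Ideal.mul_le_left⟩
      · obtain ⟨q, hq, hJq⟩ := ih hJ hfJ
        exact ⟨q, hq, Ideal.mul_le_right.trans hJq⟩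
  · obtain ⟨J, rfl⟩ := dvd_iff_le.mpr hle
    rw [f.map_mul p J (left_ne_zero_of_mul hI) (right_ne_zero_of_mul hI), hfp, zero_mul]

theorem mem_Dset_iff (f : TotMult A K) {a : A} (ha : a ≠ 0) :
    f ∈ Dset A K a ↔ ∀ p ∈ Zset A K f, a ∉ p := by
  simp [Dset, f.apply_eq_zero_iff (span_singleton_eq_bot.not.mpr ha)]

theorem inseparable_of_Zset_eq {f g : TotMult A K} (h : Zset A K f = Zset A K g) :
    Inseparable f g :=
  inseparable_iff.mpr fun a ha => by rw [mem_Dset_iff f ha, mem_Dset_iff g ha, h]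

end TotMult

section M1

open TotMult

variable {A K : Type*} [CommRing A] [IsDedekindDomain A] [Field K]

theorem t0Space_M1_iff :
    T0Space (M1 A K) ↔ ∀ f g : TotMult A K, Inseparable f g → Zset A K f = Zset A K g := by
  change T0Space (Quotient (msetoid A K)) ↔ _
  rw [t0Space_iff_inseparable]
  refine Quotient.forall.trans (forall_congr' fun f => Quotient.forall.trans
    (forall_congr' fun g => ?_))
  rw [inseparable_quotient_mk_iff fun _ _ => inseparable_of_Zset_eq, Quotient.eq]
  rfl

theorem Zset_subset_of_inseparable (htors : IsMulTorsion (ClassGroup A)) {f g : TotMult A K}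
    (h : Inseparable f g) : Zset A K f ⊆ Zset A K g := by
  rintro p ⟨hpm, hfp⟩
  rcases eq_or_ne p ⊥ with rfl | hp
  · exact ⟨hpm, g.map_bot⟩
  obtain ⟨n, hn, a, hpa⟩ :=
    ClassGroup.isMulTorsion_iff.mp htors p (prime_of_isPrime hp hpm.isPrime)
  rw [submodule_span_eq] at hpa
  have ha : a ≠ 0 := by
    rintro rfl
    exact pow_ne_zero n hp (hpa.trans (span_singleton_eq_bot.mpr rfl))
  have hap : a ∈ p := pow_le_self hn.ne' (hpa ▸ mem_span_singleton_self a)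
  have hg : g ∉ Dset A K a := by
    rw [← (inseparable_iff.mp h a ha), f.mem_Dset_iff ha]
    exact fun hf => hf p ⟨hpm, hfp⟩ hap
  simp only [g.mem_Dset_iff ha, not_forall, not_not] at hg
  obtain ⟨q, hq, haq⟩ := hg
  have := hq.1.isPrime
  have hpq : p ≤ q := IsPrime.le_of_pow_le (hpa ▸ (span_singleton_le_iff_mem q).mpr haq)
  exact hpm.eq_of_le hq.1.ne_top hpq ▸ hq

theorem t0Space_M1_of_isTorsion (htors : IsMulTorsion (ClassGroup A)) : T0Space (M1 A K) :=
  t0Space_M1_iff.mpr fun _ _ h =>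
    (Zset_subset_of_inseparable htors h).antisymm (Zset_subset_of_inseparable htors h.symm)

theorem exists_pow_isPrincipal_of_t0Space [T0Space (M1 A K)] {p : Ideal A} (hp : Prime p) :
    ∃ n, 0 < n ∧ (p ^ n).IsPrincipal := by
  let f : TotMult A K := indicator (Submonoid.powers p)
    (fun _ _ => hp.mem_powers_of_mul_mem_powers)
    (fun ⟨n, hn⟩ => pow_ne_zero n hp.ne_zero hn)
  let g : TotMult A K := indicator ⊥
    (fun I J h => Submonoid.mem_bot.mpr
      (isUnit_iff_eq_one.mp (.of_mul_eq_one J (Submonoid.mem_bot.mp h))))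
    (by simp)
  have hpm : p.IsMaximal := (isPrime_of_prime hp).isMaximal hp.ne_zero
  have hfg : Zset A K f ≠ Zset A K g := by
    intro h
    have hpg : p ∈ Zset A K g := ⟨hpm, indicator_eq_zero_iff.mpr (by simpa using hpm.ne_top)⟩
    exact indicator_eq_zero_iff.mp (h ▸ hpg).2 (Submonoid.mem_powers p)
  obtain ⟨a, -, hfga⟩ : ∃ a ≠ 0, ¬(f ∈ Dset A K a ↔ g ∈ Dset A K a) := by
    simpa using mt inseparable_iff.mpr (mt (t0Space_M1_iff.mp ‹_› f g) hfg)
  simp only [f, g, Dset, Set.mem_ofPred_eq, ne_eq, indicator_eq_zero_iff, not_not,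
    Submonoid.mem_bot, Submonoid.mem_powers_iff] at hfga
  obtain ⟨n, hn⟩ : ∃ n, p ^ n = span {a} := by tauto
  refine ⟨n, Nat.pos_of_ne_zero ?_, a, hn⟩
  rintro rfl
  exact hfga (iff_of_true ⟨0, hn⟩ (hn.symm.trans (pow_zero p)))

end M1

theorem statement18_general (A K : Type*) [CommRing A] [IsDedekindDomain A] [Field K] :
    T0Space (M1 A K) ↔ Monoid.IsTorsion (ClassGroup A) :=
  ⟨fun _ => ClassGroup.isMulTorsion_iff.mpr fun _ hp =>
    exists_pow_isPrincipal_of_t0Space (K := K) hp, t0Space_M1_of_isTorsion⟩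

theorem statement18 (A K : Type*) [CommRing A] [IsDomain A] [IsDedekindDomain A]
    (hA : ¬IsField A) [Field K] :
    T0Space (M1 A K) ↔ Monoid.IsTorsion (ClassGroup A) :=
  statement18_general A K
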